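/- The tropical complex hyperfield TC is algebraically closed: every univariate polynomial over TC of degree at least 1 has a root in TC. -/

import Mathlib

open Set
open scoped Classical

/-- The axioms of a (Krasner) hyperfield on a carrier `H`, for a multivalued
addition `add`, multiplication `mul`, additive inverse `neg`, and constants. -/
structure IsHyperfield {H : Type*} (add : H → H → Set H) (mul : H → H → H)
    (neg : H → H) (zero one : H) : Prop where
  add_nonempty : ∀ x y, (add x y).Nonempty
  hadd_comm : ∀ x y, add x y = add y x
  hadd_assoc : ∀ x y z, (⋃ w ∈ add x y, add w z) = ⋃ w ∈ add y z, add x w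
  zero_hadd : ∀ x, add zero x = {x}
  hneg_add : ∀ x, zero ∈ add x (neg x)
  hneg_unique : ∀ x y, zero ∈ add x y → y = neg x
  reversible : ∀ x y z, x ∈ add y z → z ∈ add x (neg y)
  hmul_comm : ∀ x y, mul x y = mul y x
  hmul_assoc : ∀ x y z, mul (mul x y) z = mul x (mul y z)
  one_hmul : ∀ x, mul one x = x
  zero_hmul : ∀ x, mul zero x = zero
  hdistrib : ∀ a x y, (mul a) '' (add x y) = add (mul a x) (mul a y)
  zero_ne_one : zero ≠ one
  exists_inv : ∀ x, x ≠ zero → ∃ y, mul x y = one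

/-- Multivalued hypersum of a list of elements. -/
def hsum {H : Type*} (add : H → H → Set H) (zero : H) : List H → Set H
  | [] => {zero}
  | a :: l => ⋃ b ∈ hsum add zero l, add a b

/-- Powers with respect to a monoid multiplication. -/
def hpow {H : Type*} (mul : H → H → H) (one : H) (a : H) : ℕ → H
  | 0 => one
  | n + 1 => mul a (hpow mul one a n)

/-- Multivalued evaluation of the univariate polynomial `⊞_{i=0}^n c_i ⊙ X^i` at `a`. -/
def evalPoly {H : Type*} (add : H → H → Set H) (mul : H → H → H) (zero one : H)
    (n : ℕ) (c : ℕ → H) (a : H) : Set H :=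
  hsum add zero ((List.range (n + 1)).map fun i => mul (c i) (hpow mul one a i))

/-- Multivalued evaluation of a multivariate polynomial given by a list of
terms (coefficient, exponent vector) at a point `x`. -/
def evalMPoly {H : Type*} (add : H → H → Set H) (mul : H → H → H) (zero one : H)
    {n : ℕ} (terms : List (H × (Fin n → ℕ))) (x : Fin n → H) : Set H :=
  hsum add zero (terms.map fun t =>
    mul t.1 ((List.ofFn fun j => hpow mul one (x j) (t.2 j)).foldr mul one))

/-- Hyperfield homomorphism axioms. -/
structure IsHyperfieldHom {H1 H2 : Type*}
    (add1 : H1 → H1 → Set H1) (mul1 : H1 → H1 → H1) (zero1 one1 : H1)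
    (add2 : H2 → H2 → Set H2) (mul2 : H2 → H2 → H2) (zero2 one2 : H2)
    (f : H1 → H2) : Prop where
  map_zero : f zero1 = zero2
  map_one : f one1 = one2
  map_mul : ∀ x y, f (mul1 x y) = mul2 (f x) (f y)
  map_add : ∀ x y, f '' (add1 x y) ⊆ add2 (f x) (f y)

/-- `f` is relatively algebraically closed: every root of the coefficientwise
push-forward of a univariate polynomial lifts through `f` to a root. -/
def IsRAC {H1 H2 : Type*}
    (add1 : H1 → H1 → Set H1) (mul1 : H1 → H1 → H1) (zero1 one1 : H1)
    (add2 : H2 → H2 → Set H2) (mul2 : H2 → H2 → H2) (zero2 one2 : H2)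
    (f : H1 → H2) : Prop :=
  ∀ (n : ℕ) (c : ℕ → H1) (b : H2),
    zero2 ∈ evalPoly add2 mul2 zero2 one2 n (fun i => f (c i)) b →
    ∃ a : H1, f a = b ∧ zero1 ∈ evalPoly add1 mul1 zero1 one1 n c a

/-- Tropical hyperaddition on `ℝ ∪ {-∞}`. -/
noncomputable def Tadd (x y : WithBot ℝ) : Set (WithBot ℝ) :=
  if x = y then {z | z ≤ x} else {max x y}

/-- Tropical multiplication: addition of extended reals. -/
noncomputable def Tmul (x y : WithBot ℝ) : WithBot ℝ := x + y

/-- Hyperaddition of the tropical complex hyperfield `TC` on `ℂ`. -/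
noncomputable def TCadd (z w : ℂ) : Set ℂ :=
  if w = -z then {c | ‖c‖ ≤ ‖z‖}
  else if ‖w‖ < ‖z‖ then {z}
  else if ‖z‖ < ‖w‖ then {w}
  else {c | ∃ t : ℝ, 0 ≤ t ∧ t ≤ 1 ∧
    c = ((‖z‖ / ‖(t : ℂ) * z + (1 - (t : ℂ)) * w‖ : ℝ) : ℂ) *
      ((t : ℂ) * z + (1 - (t : ℂ)) * w)}

/-- The homomorphism `η(z) = log |z|` from `TC` to the tropical hyperfield. -/
noncomputable def eta (z : ℂ) : WithBot ℝ :=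
  if z = 0 then ⊥ else ((Real.log ‖z‖ : ℝ) : WithBot ℝ)

/-- Hyperaddition of the hyperfield of signs. -/
noncomputable def Sadd (x y : SignType) : Set SignType :=
  if x = 0 then {y} else if y = 0 then {x} else if x = y then {x} else Set.univ

/-- Hyperaddition of the Krasner hyperfield on `Bool` (`false = 0`, `true = 1`). -/
def Kadd (x y : Bool) : Set Bool :=
  if x = false then {y} else if y = false then {x} else Set.univ

/-- `c ∈ (X ⊞ -a) ⊙ d` : the coefficients `c` arise from multiplying the linear
factor `X ⊞ (-a)` with the polynomial with coefficients `d`. -/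
def LinFactor {H : Type*} (add : H → H → Set H) (mul : H → H → H) (zero : H)
    (neg : H → H) (a : H) (c d : ℕ → H) : Prop :=
  ∀ i, c i ∈ add (if i = 0 then zero else d (i - 1)) (mul (neg a) (d i))

/-- `MultGe … a n c k` : the multiplicity of `a` as a root of the degree-`n`
polynomial with coefficients `c` is at least `k` (recursive peeling of linear factors). -/
def MultGe {H : Type*} (add : H → H → Set H) (mul : H → H → H) (zero one : H)
    (neg : H → H) (a : H) : ℕ → (ℕ → H) → ℕ → Prop
  | _, _, 0 => True
  | n, c, k + 1 => zero ∈ evalPoly add mul zero one n c a ∧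
      ∃ d : ℕ → H, (∀ i, n ≤ i → d i = zero) ∧ LinFactor add mul zero neg a c d ∧
        MultGe add mul zero one neg a (n - 1) d k

/-- The multiplicity of `a` as a root. -/
noncomputable def hmult {H : Type*} (add : H → H → Set H) (mul : H → H → H)
    (zero one : H) (neg : H → H) (n : ℕ) (c : ℕ → H) (a : H) : ℕ :=
  sSup {k | MultGe add mul zero one neg a n c k}

/-- The multiplicity bound: the sum of root multiplicities is at most the degree. -/
def MultBound {H : Type*} (add : H → H → Set H) (mul : H → H → H)
    (zero one : H) (neg : H → H) : Prop :=
  ∀ (n : ℕ) (c : ℕ → H), c n ≠ zero →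
    ∀ S : Finset H, (S.sum fun a => hmult add mul zero one neg n c a) ≤ n

/-- The multiplicity equality: the sum of root multiplicities equals the degree. -/
def MultEq {H : Type*} (add : H → H → Set H) (mul : H → H → H)
    (zero one : H) (neg : H → H) : Prop :=
  MultBound add mul zero one neg ∧
    ∀ (n : ℕ) (c : ℕ → H), c n ≠ zero →
      ∃ S : Finset H, (S.sum fun a => hmult add mul zero one neg n c a) = n

/-- Iterated splitting off of a list of linear factors: `c ∈ (X ⊞ -a₁) ⊙ ⋯ ⊙ (X ⊞ -aₘ) ⊙ d`. -/
def MultiLinFactor {H : Type*} (add : H → H → Set H) (mul : H → H → H) (zero : H)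
    (neg : H → H) : List H → (ℕ → H) → (ℕ → H) → Prop
  | [], c, d => c = d
  | a :: l, c, d => ∃ e : ℕ → H, LinFactor add mul zero neg a c e ∧
      MultiLinFactor add mul zero neg l e d

/-- The inheritance property: any sub-multiset of the multiset of roots (with
multiplicity) of size at most the degree can be split off as linear factors. -/
def Inheritance {H : Type*} (add : H → H → Set H) (mul : H → H → H)
    (zero one : H) (neg : H → H) : Prop :=
  ∀ (n : ℕ) (c : ℕ → H), c n ≠ zero →
    ∀ l : List H, l.length ≤ n →
      (∀ a : H, (l.filter fun x => x = a).length ≤ hmult add mul zero one neg n c a) →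
      ∃ q : ℕ → H, MultiLinFactor add mul zero neg l c q

/-!
Write the terms of `p(a)` as `c₀` followed by the tail `c_k a^k`, `1 ≤ k ≤ n`. A hypersum in
`TC` contains every summand of maximal modulus, and `z ⊞ -z` contains `0`. So it suffices to
find `a` with `|c_k a^k| ≤ |c₀|` for all `k ≥ 1` and `c_j a^j = -c₀` for some `j ≥ 1`. The
radius `r = |a|` is found by the intermediate value theorem applied to `r ↦ max_k |c_k| r^k`,
and the argument of `a` by extracting a `j`-th root of `-c₀ / c_j`.
-/

lemma hpow_eq_pow {M : Type*} [Monoid M] (a : M) (k : ℕ) : hpow (· * ·) 1 a k = a ^ k := by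
  induction k with
  | zero => exact (pow_zero a).symm
  | succ k ih => exact (congrArg (a * ·) ih).trans (pow_succ' a k).symm

lemma TCadd_nonempty (z w : ℂ) : (TCadd z w).Nonempty := by
  unfold TCadd
  split_ifs
  · exact ⟨0, by simp⟩
  · exact ⟨z, rfl⟩
  · exact ⟨w, rfl⟩
  · exact ⟨_, 0, le_rfl, zero_le_one, rfl⟩

lemma norm_le_max_of_mem_TCadd {z w x : ℂ} (hx : x ∈ TCadd z w) : ‖x‖ ≤ max ‖z‖ ‖w‖ := by
  unfold TCadd at hx
  split_ifs at hx
  · exact hx.trans (le_max_left _ _)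
  · rw [mem_singleton_iff.mp hx]; exact le_max_left _ _
  · rw [mem_singleton_iff.mp hx]; exact le_max_right _ _
  · obtain ⟨t, -, -, rfl⟩ := hx
    set u := (t : ℂ) * z + (1 - (t : ℂ)) * w
    rcases eq_or_ne u 0 with hu | hu
    · simp [hu]
    · rw [norm_mul, Complex.norm_real, Real.norm_of_nonneg (by positivity),
        div_mul_cancel₀ _ (norm_ne_zero_iff.mpr hu)]
      exact le_max_left _ _

lemma zero_mem_TCadd_neg (z : ℂ) : 0 ∈ TCadd z (-z) := by
  simp [TCadd]

lemma left_mem_TCadd {z w : ℂ} (h : ‖w‖ ≤ ‖z‖) : z ∈ TCadd z w := by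
  unfold TCadd
  split_ifs with _ _ hlt
  · exact le_refl ‖z‖
  · rfl
  · exact absurd h (not_le.mpr hlt)
  · refine ⟨1, zero_le_one, le_rfl, ?_⟩
    rcases eq_or_ne z 0 with rfl | hz
    · simp
    · simp [div_self (norm_ne_zero_iff.mpr hz)]

lemma right_mem_TCadd {z w : ℂ} (h : ‖z‖ ≤ ‖w‖) : w ∈ TCadd z w := by
  unfold TCadd
  split_ifs with hneg hlt hgt
  · simp [hneg]
  · exact absurd h (not_le.mpr hlt)
  · rfl
  · refine ⟨0, le_rfl, zero_le_one, ?_⟩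
    rcases eq_or_ne w 0 with rfl | hw
    · simp
    · have hu : ((0 : ℝ) : ℂ) * z + (1 - ((0 : ℝ) : ℂ)) * w = w := by push_cast; ring
      rw [hu, le_antisymm h (not_lt.mp hgt), div_self (norm_ne_zero_iff.mpr hw),
        Complex.ofReal_one, one_mul]

lemma exists_mem_hsum_TCadd_norm_le {M : ℝ} (hM : 0 ≤ M) {l : List ℂ} (hl : ∀ x ∈ l, ‖x‖ ≤ M) :
    ∃ b ∈ hsum TCadd 0 l, ‖b‖ ≤ M := by
  induction l with
  | nil => exact ⟨0, rfl, by simpa using hM⟩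
  | cons t l ih =>
    obtain ⟨b, hb, hbM⟩ := ih fun x hx => hl x (List.mem_cons_of_mem _ hx)
    obtain ⟨x, hx⟩ := TCadd_nonempty t b
    exact ⟨x, mem_biUnion hb hx,
      (norm_le_max_of_mem_TCadd hx).trans (max_le (hl t List.mem_cons_self) hbM)⟩

lemma mem_hsum_TCadd_of_forall_norm_le {z : ℂ} {l : List ℂ} (hz : z ∈ l)
    (hl : ∀ x ∈ l, ‖x‖ ≤ ‖z‖) : z ∈ hsum TCadd 0 l := by
  induction l with
  | nil => cases hz
  | cons t l ih =>
    have hl' : ∀ x ∈ l, ‖x‖ ≤ ‖z‖ := fun x hx => hl x (List.mem_cons_of_mem _ hx)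
    rcases List.mem_cons.mp hz with rfl | hz
    · obtain ⟨b, hb, hbz⟩ := exists_mem_hsum_TCadd_norm_le (norm_nonneg z) hl'
      exact mem_biUnion hb (left_mem_TCadd hbz)
    · exact mem_biUnion (ih hz hl') (right_mem_TCadd (hl t List.mem_cons_self))

lemma zero_mem_evalPoly_TCadd {n : ℕ} {c : ℕ → ℂ} {a : ℂ} {j : ℕ} (hj : j ∈ Finset.Icc 1 n)
    (hcancel : c j * a ^ j = -c 0) (hle : ∀ k ∈ Finset.Icc 1 n, ‖c k * a ^ k‖ ≤ ‖c 0‖) :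
    0 ∈ evalPoly TCadd (· * ·) 0 1 n c a := by
  obtain ⟨hj1, hjn⟩ := Finset.mem_Icc.mp hj
  unfold evalPoly
  rw [List.range_succ_eq_map, List.map_cons, List.map_map]
  have htail : -c 0 ∈ hsum TCadd 0
      ((List.range n).map ((fun i => c i * hpow (· * ·) 1 a i) ∘ Nat.succ)) := by
    refine mem_hsum_TCadd_of_forall_norm_le (List.mem_map.mpr ⟨j - 1, ?_, ?_⟩) ?_
    · exact List.mem_range.mpr (by omega)
    · rw [Function.comp_apply, Nat.succ_eq_add_one, Nat.sub_add_cancel hj1, hpow_eq_pow, hcancel]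
    · simp only [List.mem_map, List.mem_range, Function.comp_apply, hpow_eq_pow, norm_neg]
      rintro _ ⟨i, hi, rfl⟩
      exact hle (i + 1) (Finset.mem_Icc.mpr ⟨by omega, by omega⟩)
  refine mem_biUnion htail ?_
  simpa [hpow] using zero_mem_TCadd_neg (c 0)

lemma exists_pos_sup'_mul_pow_eq {s : Finset ℕ} (hs : 0 ∉ s) {b : ℕ → ℝ} {k : ℕ} (hk : k ∈ s)
    (hbk : 0 < b k) {A : ℝ} (hA : 0 < A) :
    ∃ r > 0, s.sup' ⟨k, hk⟩ (fun i => b i * r ^ i) = A := by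
  set g : ℝ → ℝ := fun r => s.sup' ⟨k, hk⟩ (fun i => b i * r ^ i)
  have hg : Continuous g :=
    continuous_iff_continuousAt.mpr fun x => ContinuousAt.finset_sup'_apply ⟨k, hk⟩
      fun i _ => (continuous_const.mul (continuous_pow i)).continuousAt
  have hg0 : g 0 = 0 := by
    have hpow0 : ∀ i ∈ s, b i * (0 : ℝ) ^ i = 0 := fun i hi => by
      rw [zero_pow (ne_of_mem_of_not_mem hi hs), mul_zero]
    exact le_antisymm (Finset.sup'_le _ _ fun i hi => (hpow0 i hi).le)
      ((hpow0 k hk).symm.le.trans (Finset.le_sup' (fun i => b i * (0 : ℝ) ^ i) hk))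
  set R := max 1 (A / b k)
  have hgR : A ≤ g R :=
    calc A ≤ b k * R := (div_le_iff₀' hbk).mp (le_max_right _ _)
      _ ≤ b k * R ^ k := by
        gcongr
        exact le_self_pow₀ (le_max_left _ _) (ne_of_mem_of_not_mem hk hs)
      _ ≤ g R := Finset.le_sup' (fun i => b i * R ^ i) hk
  obtain ⟨r, hr, hgr⟩ := intermediate_value_Icc (zero_le_one.trans (le_max_left 1 _))
    hg.continuousOn ⟨hg0.symm ▸ hA.le, hgR⟩
  refine ⟨r, lt_of_le_of_ne hr.1 ?_, hgr⟩
  rintro rfl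
  exact hA.ne' (hg0 ▸ hgr).symm

lemma exists_balanced_point {n : ℕ} (hn : 1 ≤ n) {c : ℕ → ℂ} (hc : c n ≠ 0) :
    ∃ a : ℂ, ∃ j ∈ Finset.Icc 1 n, c j * a ^ j = -c 0 ∧
      ∀ k ∈ Finset.Icc 1 n, ‖c k * a ^ k‖ ≤ ‖c 0‖ := by
  have hnmem : n ∈ Finset.Icc 1 n := Finset.mem_Icc.mpr ⟨hn, le_rfl⟩
  rcases eq_or_ne (c 0) 0 with h0 | h0
  · refine ⟨0, 1, Finset.mem_Icc.mpr ⟨le_rfl, hn⟩, by simp [h0], fun k hk => ?_⟩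
    simp [zero_pow (Nat.one_le_iff_ne_zero.mp (Finset.mem_Icc.mp hk).1)]
  obtain ⟨r, hr, hsup⟩ := exists_pos_sup'_mul_pow_eq (b := fun i => ‖c i‖) (by simp) hnmem
    (norm_pos_iff.mpr hc)
      (norm_pos_iff.mpr h0)
  obtain ⟨j, hj, hjmax⟩ := Finset.exists_mem_eq_sup' ⟨n, hnmem⟩ (fun i => ‖c i‖ * r ^ i)
  have hjr : ‖c j‖ * r ^ j = ‖c 0‖ := hjmax ▸ hsup
  have hj0 : j ≠ 0 := Nat.one_le_iff_ne_zero.mp (Finset.mem_Icc.mp hj).1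
  have hcj : c j ≠ 0 := by
    rintro hcj
    simp only [hcj, norm_zero, zero_mul] at hjr
    exact h0 (norm_eq_zero.mp hjr.symm)
  obtain ⟨a, ha⟩ := IsAlgClosed.exists_pow_nat_eq (-c 0 / c j) (Nat.pos_of_ne_zero hj0)
  have hcancel : c j * a ^ j = -c 0 := by rw [ha, mul_div_cancel₀ _ hcj]
  have hnorm : ‖a‖ = r := by
    have : ‖c j‖ * ‖a‖ ^ j = ‖c j‖ * r ^ j := by
      rw [hjr, ← norm_pow, ← norm_mul, hcancel, norm_neg]
    exact (pow_left_inj₀ (norm_nonneg a) hr.le hj0).mp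
      (mul_left_cancel₀ (norm_ne_zero_iff.mpr hcj) this)
  refine ⟨a, j, hj, hcancel, fun k hk => ?_⟩
  rw [norm_mul, norm_pow, hnorm, ← hsup]
  exact Finset.le_sup' (fun i => ‖c i‖ * r ^ i) hk

/-- The tropical complex hyperfield `TC` is algebraically closed:
every univariate polynomial of degree at least 1 has a root. -/
theorem TC_algClosed (n : ℕ) (hn : 1 ≤ n) (c : ℕ → ℂ) (hc : c n ≠ 0) :
    ∃ a : ℂ, (0 : ℂ) ∈ evalPoly TCadd (· * ·) 0 1 n c a := by
  obtain ⟨a, j, hj, hcancel, hle⟩ := exists_balanced_point hn hc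
  exact ⟨a, zero_mem_evalPoly_TCadd hj hcancel hle⟩
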